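/- Let A be a 2n×2n real positive definite matrix, m ≤ n a positive integer, and S ∈ Sp(2n,2m,A). Then −SSᵀ belongs to the Fenchel subdifferential of σ_m at A; that is, ⟨−SSᵀ, H − A⟩ ≤ σ_m(H) − σ_m(A) for every H ∈ S(2n). -/

import Mathlib

open Filter Matrix Topology
open scoped Classical

/-- The space of `2n × 2n` real matrices, indexed by `Fin n ⊕ Fin n`. -/
abbrev Mat (n : ℕ) := Matrix (Fin n ⊕ Fin n) (Fin n ⊕ Fin n) ℝ

/-- `2n × 2m` real matrices. -/
abbrev MatR (n m : ℕ) := Matrix (Fin n ⊕ Fin n) (Fin m ⊕ Fin m) ℝ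

/-- The standard symplectic form matrix `J = [[0, I], [-I, 0]]`. -/
def symplJ (n : ℕ) : Mat n := Matrix.fromBlocks 0 1 (-1) 0

/-- The increasingly sorted symplectic eigenvalues of `A` (0-based indexing), defined via
Williamson's theorem: `d : Fin n → ℝ` is the unique monotone positive tuple such that
`MᵀAM = diag d ⊕ diag d` for some symplectic `M` (which exists whenever `A` is positive
definite). -/
noncomputable def symplEig {n : ℕ} (A : Mat n) : Fin n → ℝ :=
  if h : ∃ d : Fin n → ℝ, Monotone d ∧ (∀ i, 0 < d i) ∧
      ∃ M : Mat n, Mᵀ * symplJ n * M = symplJ n ∧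
        Mᵀ * A * M = Matrix.fromBlocks (Matrix.diagonal d) 0 0 (Matrix.diagonal d)
  then h.choose else fun _ => 0

/-- `sEig A j` is the `j`-th symplectic eigenvalue `d_j(A)`, with 1-based index `j`. -/
noncomputable def sEig {n : ℕ} (A : Mat n) (j : ℕ) : ℝ :=
  if h : j - 1 < n then symplEig A ⟨j - 1, h⟩ else 0

/-- `i_m`: the number of indices `k ≤ m` (1-based) with `d_k(A) = d_m(A)`. -/
noncomputable def iIdx {n : ℕ} (A : Mat n) (m : ℕ) : ℕ :=
  ((Finset.Icc 1 n).filter fun k => k ≤ m ∧ sEig A k = sEig A m).card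

/-- `j_m`: the number of indices `k > m` (1-based) with `d_k(A) = d_m(A)`. -/
noncomputable def jIdx {n : ℕ} (A : Mat n) (m : ℕ) : ℕ :=
  ((Finset.Icc 1 n).filter fun k => m < k ∧ sEig A k = sEig A m).card

/-- Membership in `Sp(2n, 2m)`: the columns form a symplectically orthonormal set,
equivalently `Sᵀ J_{2n} S = J_{2m}`. -/
def InSp (n m : ℕ) (S : MatR n m) : Prop := Sᵀ * symplJ n * S = symplJ m

/-- Membership in `Sp(2n, 2m, A)`: additionally the `j`-th column pair `(u_j, v_j)` is a pair of
symplectic eigenvectors of `A` for the symplectic eigenvalue `d_j(A)`. -/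
def InSpA (n m : ℕ) (A : Mat n) (S : MatR n m) : Prop :=
  InSp n m S ∧ ∀ j : Fin m,
    A *ᵥ (fun i => S i (Sum.inl j)) = sEig A (j + 1) • (symplJ n *ᵥ fun i => S i (Sum.inr j)) ∧
    A *ᵥ (fun i => S i (Sum.inr j)) = (-sEig A (j + 1)) • (symplJ n *ᵥ fun i => S i (Sum.inl j))

/-- The inner product `⟨X, Y⟩ = tr (X Y)` on matrices. -/
noncomputable def minner {α : Type*} [Fintype α] (X Y : Matrix α α ℝ) : ℝ := (X * Y).trace

/-- `σ_m : S(2n) → (-∞, ∞]`, equal to `-2 (d_1(P) + ⋯ + d_m(P))` on positive definite `P`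
and `∞` elsewhere. -/
noncomputable def sigmaE {n : ℕ} (m : ℕ) (P : Mat n) : EReal :=
  if P.PosDef then (((-2) * ∑ j ∈ Finset.Icc 1 m, sEig P j : ℝ) : EReal) else ⊤

/-- The real-valued version of `σ_m`, i.e. `-2 (d_1(P) + ⋯ + d_m(P))`. -/
noncomputable def sigmaR {n : ℕ} (m : ℕ) (P : Mat n) : ℝ :=
  (-2) * ∑ j ∈ Finset.Icc 1 m, sEig P j

/-- The Fenchel subdifferential of `σ_m` at `A`, within the space `S(2n)` of symmetric
matrices. -/
noncomputable def sigmaSub {n : ℕ} (m : ℕ) (A : Mat n) : Set (Mat n) :=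
  {X | X.IsSymm ∧ ∀ H : Mat n, H.IsSymm →
    ((minner X (H - A) : ℝ) : EReal) ≤ sigmaE m H - sigmaE m A}

/-- `λ_k↓(C)`: the `k`-th largest eigenvalue (1-based) of the Hermitian matrix `C`. -/
noncomputable def kthLargestEig {ι : Type*} [Fintype ι] [DecidableEq ι]
    (C : Matrix ι ι ℂ) (k : ℕ) : ℝ :=
  if h : C.IsHermitian then
    ((Finset.univ.val.map h.eigenvalues).sort (· ≤ ·)).getD (Fintype.card ι - k) 0
  else 0

/-- The index set for `M̃`: indices whose symplectic eigenvalue equals `d_m(A)`. -/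
abbrev tilIdx {n : ℕ} (A : Mat n) (m : ℕ) := {k : Fin n // symplEig A k = sEig A m}

/-- The index set for `M̄`: indices whose symplectic eigenvalue is `< d_m(A)`. -/
abbrev barIdx {n : ℕ} (A : Mat n) (m : ℕ) := {k : Fin n // symplEig A k < sEig A m}

/-- `M̃`: the submatrix of `M` consisting of the column pairs `(u_k, v_k)` with
`d_k(A) = d_m(A)`. -/
noncomputable def Mtil {n : ℕ} (A : Mat n) (m : ℕ) (M : Mat n) :
    Matrix (Fin n ⊕ Fin n) (tilIdx A m ⊕ tilIdx A m) ℝ :=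
  M.submatrix id (Sum.map Subtype.val Subtype.val)

/-- `M̄`: the submatrix of `M` consisting of the column pairs `(u_k, v_k)` with
`d_k(A) < d_m(A)`. -/
noncomputable def Mbar {n : ℕ} (A : Mat n) (m : ℕ) (M : Mat n) :
    Matrix (Fin n ⊕ Fin n) (barIdx A m ⊕ barIdx A m) ℝ :=
  M.submatrix id (Sum.map Subtype.val Subtype.val)

/-- `B̄ = -M̄ᵀ B M̄`. -/
noncomputable def Bbar {n : ℕ} (A : Mat n) (m : ℕ) (M B : Mat n) :
    Matrix (barIdx A m ⊕ barIdx A m) (barIdx A m ⊕ barIdx A m) ℝ :=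
  -((Mbar A m M)ᵀ * B * Mbar A m M)

/-- `B̃ = -M̃ᵀ B M̃`. -/
noncomputable def Btil {n : ℕ} (A : Mat n) (m : ℕ) (M B : Mat n) :
    Matrix (tilIdx A m ⊕ tilIdx A m) (tilIdx A m ⊕ tilIdx A m) ℝ :=
  -((Mtil A m M)ᵀ * B * Mtil A m M)

/-- `B̃̃ = B̃₁₁ + B̃₂₂ + i (B̃₁₂ - B̃₁₂ᵀ)`, a Hermitian matrix. -/
noncomputable def Btiltil {n : ℕ} (A : Mat n) (m : ℕ) (M B : Mat n) :
    Matrix (tilIdx A m) (tilIdx A m) ℂ :=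
  fun p q =>
    ((Btil A m M B (Sum.inl p) (Sum.inl q) + Btil A m M B (Sum.inr p) (Sum.inr q) : ℝ) : ℂ) +
      Complex.I *
        ((Btil A m M B (Sum.inl p) (Sum.inr q) - Btil A m M B (Sum.inl q) (Sum.inr p) : ℝ) : ℂ)

/-- The directional derivative `d_m′(A; B)` of the `m`-th symplectic eigenvalue (1-based `m`). -/
noncomputable def dDeriv {n : ℕ} (A B : Mat n) (m : ℕ) : ℝ :=
  limUnder (𝓝[>] (0 : ℝ)) (fun t => (sEig (A + t • B) m - sEig A m) / t)

/-- `m̂`: the smallest 1-based index `j` with `d_j(A) = d_m(A)`. -/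
noncomputable def mhat {n : ℕ} (A : Mat n) (m : ℕ) : ℕ :=
  sInf {j : ℕ | 1 ≤ j ∧ sEig A j = sEig A m}

/-- The Clarke directional derivative `f°(A; B)` of `f` at `A` in direction `B`, where the
base point varies in the space of symmetric matrices. -/
noncomputable def clarkeD {n : ℕ} (f : Mat n → ℝ) (A B : Mat n) : ℝ :=
  Filter.limsup (fun p : Mat n × ℝ => (f (p.1 + p.2 • B) - f p.1) / p.2)
    ((𝓝[{X : Mat n | X.IsSymm}] A) ×ˢ (𝓝[>] (0 : ℝ)))

/-- The Clarke subdifferential `∂° f(A)`. -/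
noncomputable def clarkeSub {n : ℕ} (f : Mat n → ℝ) (A : Mat n) : Set (Mat n) :=
  {X | X.IsSymm ∧ ∀ H : Mat n, H.IsSymm → minner X H ≤ clarkeD f A H}

/-- The Michel-Penot directional derivative `f◇(A; B)`. -/
noncomputable def mpD {n : ℕ} (f : Mat n → ℝ) (A B : Mat n) : ℝ :=
  ⨆ X : {X : Mat n // X.IsSymm},
    Filter.limsup (fun t : ℝ => (f (A + t • X.1 + t • B) - f (A + t • X.1)) / t) (𝓝[>] (0 : ℝ))

/-- The Michel-Penot subdifferential `∂◇ f(A)`. -/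
noncomputable def mpSub {n : ℕ} (f : Mat n → ℝ) (A : Mat n) : Set (Mat n) :=
  {X | X.IsSymm ∧ ∀ H : Mat n, H.IsSymm → minner X H ≤ mpD f A H}

/-- `S_m(A)`: the set of normalised symplectic eigenvector pairs of `A` corresponding to the
symplectic eigenvalue `d_m(A)`. -/
noncomputable def SmSet {n : ℕ} (A : Mat n) (m : ℕ) :
    Set ((Fin n ⊕ Fin n → ℝ) × (Fin n ⊕ Fin n → ℝ)) :=
  {p | A *ᵥ p.1 = sEig A m • (symplJ n *ᵥ p.2) ∧
       A *ᵥ p.2 = (-sEig A m) • (symplJ n *ᵥ p.1) ∧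
       p.1 ⬝ᵥ (symplJ n *ᵥ p.2) = 1}

/-- The set `{ -(1/2)(xxᵀ + yyᵀ) : (x,y) ∈ S_m(A) }`. -/
noncomputable def gradSet {n : ℕ} (A : Mat n) (m : ℕ) : Set (Mat n) :=
  {X | ∃ p ∈ SmSet A m,
    X = (-(1 / 2) : ℝ) • (Matrix.vecMulVec p.1 p.1 + Matrix.vecMulVec p.2 p.2)}

/-- A symplectic eigenvector pair of `A` corresponding to some symplectic eigenvalue `d`. -/
noncomputable def EigPair {n : ℕ} (A : Mat n) (u v : Fin n ⊕ Fin n → ℝ) : Prop :=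
  (u ≠ 0 ∨ v ≠ 0) ∧ ∃ d : ℝ, (∃ i : Fin n, symplEig A i = d) ∧
    A *ᵥ u = d • (symplJ n *ᵥ v) ∧ A *ᵥ v = (-d) • (symplJ n *ᵥ u)

/-- The helper extending a finite matrix to a function on `ℕ × ℕ` (by zero). -/
def padFun {r i : ℕ} (U : Matrix (Fin r) (Fin i) ℝ) : ℕ → ℕ → ℝ :=
  fun a b => if h : a < r ∧ b < i then U ⟨a, h.1⟩ ⟨b, h.2⟩ else 0

/-- The set `Δ_m(A)` of structured `2n × 2m` matrices. -/
noncomputable def DeltaSet {n : ℕ} (A : Mat n) (m : ℕ) : Set (MatR n m) :=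
  {H | ∃ (U V : Matrix (Fin (iIdx A m + jIdx A m)) (Fin (iIdx A m)) ℝ),
    ((U.map (Complex.ofReal)) + Complex.I • (V.map (Complex.ofReal)))ᴴ *
      ((U.map (Complex.ofReal)) + Complex.I • (V.map (Complex.ofReal))) = 1 ∧
    ∀ (k : Fin n) (c : Fin m),
      (H (Sum.inl k) (Sum.inl c) =
        if (k : ℕ) < m - iIdx A m ∧ (c : ℕ) < m - iIdx A m then
          (if (k : ℕ) = (c : ℕ) then 1 else 0)
        else if (m - iIdx A m ≤ (k : ℕ) ∧ (k : ℕ) < m + jIdx A m) ∧ m - iIdx A m ≤ (c : ℕ) then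
          padFun U ((k : ℕ) - (m - iIdx A m)) ((c : ℕ) - (m - iIdx A m))
        else 0) ∧
      (H (Sum.inl k) (Sum.inr c) =
        if (m - iIdx A m ≤ (k : ℕ) ∧ (k : ℕ) < m + jIdx A m) ∧ m - iIdx A m ≤ (c : ℕ) then
          padFun V ((k : ℕ) - (m - iIdx A m)) ((c : ℕ) - (m - iIdx A m))
        else 0) ∧
      (H (Sum.inr k) (Sum.inl c) =
        if (m - iIdx A m ≤ (k : ℕ) ∧ (k : ℕ) < m + jIdx A m) ∧ m - iIdx A m ≤ (c : ℕ) then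
          -padFun V ((k : ℕ) - (m - iIdx A m)) ((c : ℕ) - (m - iIdx A m))
        else 0) ∧
      (H (Sum.inr k) (Sum.inr c) =
        if (k : ℕ) < m - iIdx A m ∧ (c : ℕ) < m - iIdx A m then
          (if (k : ℕ) = (c : ℕ) then 1 else 0)
        else if (m - iIdx A m ≤ (k : ℕ) ∧ (k : ℕ) < m + jIdx A m) ∧ m - iIdx A m ≤ (c : ℕ) then
          padFun U ((k : ℕ) - (m - iIdx A m)) ((c : ℕ) - (m - iIdx A m))
        else 0)}

/-- The operator norm (with respect to the Euclidean norm) of a `2n × 2n` real matrix. -/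
noncomputable def opN {n : ℕ} (A : Mat n) : ℝ :=
  ‖Matrix.toEuclideanCLM (𝕜 := ℝ) A‖

/-!
The left-hand side equals `tr (Sᵀ A S) - tr (Sᵀ H S)`, and the eigenvector relations give
`tr (Sᵀ A S) = 2 (d₁(A) + ⋯ + d_m(A))`. So everything reduces to the symplectic trace minimum
principle `2 (d₁(H) + ⋯ + d_m(H)) ≤ tr (Tᵀ H T)` for every `T` with `Tᵀ J T = J`, and by
Williamson's theorem to `H = D ⊕ D` with `D = diag (d₁, …, dₙ)`.

For `X = T - J T J` one has `Xᵀ X = 4 + Yᵀ Y` with `Y = T + J T J`, so `‖X x‖² ≥ 4 ‖x‖²`. The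
vectors killed by the `2τ` rows of `X` with index `< τ` form a space of dimension `≥ 2m - 2τ`;
Bessel's inequality over an orthonormal basis of it bounds the squared norms of the remaining rows
from below by `8 (m - τ)`. Abel summation against the increasing `d_k` turns these tail bounds
into `tr (Xᵀ (D ⊕ D) X) ≥ 8 (d₁ + ⋯ + d_m)`, while the parallelogram law, together with
`J (D ⊕ D) = (D ⊕ D) J`, gives `tr (Xᵀ (D ⊕ D) X) ≤ 4 tr (Tᵀ (D ⊕ D) T)`.
-/

open Finset

theorem trace_transpose_mul_diagonal_mul {ι κ : Type*} [Fintype ι] [DecidableEq ι] [Fintype κ]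
    (X : Matrix ι κ ℝ) (δ : ι → ℝ) :
    (Xᵀ * diagonal δ * X).trace = ∑ i, δ i * ∑ j, X i j ^ 2 := by
  simp only [trace, Matrix.diag, mul_apply, diagonal_apply, transpose_apply, mul_ite, mul_zero,
    sum_ite_eq', mem_univ, if_true, mul_sum]
  rw [sum_comm]
  exact sum_congr rfl fun i _ => sum_congr rfl fun j _ => by ring

theorem trace_transpose_mul_diagonal_nonneg {ι κ : Type*} [Fintype ι] [DecidableEq ι] [Fintype κ]
    (X : Matrix ι κ ℝ) {δ : ι → ℝ} (hδ : ∀ i, 0 ≤ δ i) : 0 ≤ (Xᵀ * diagonal δ * X).trace := by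
  rw [trace_transpose_mul_diagonal_mul]
  exact sum_nonneg fun i _ => mul_nonneg (hδ i) (sum_nonneg fun j _ => sq_nonneg _)

theorem mul_card_sub_le_sum_sq_rows_compl {ι κ : Type*} [Fintype ι] [DecidableEq ι] [Fintype κ]
    (X : Matrix ι κ ℝ) {c : ℝ} (hc : 0 ≤ c) (hX : ∀ x, c * (x ⬝ᵥ x) ≤ X *ᵥ x ⬝ᵥ X *ᵥ x)
    (s : Finset ι) :
    c * (Fintype.card κ - #s : ℕ) ≤ ∑ i ∈ sᶜ, ∑ j, X i j ^ 2 := by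
  let L : EuclideanSpace ℝ κ →ₗ[ℝ] s → ℝ :=
    (X.submatrix Subtype.val id).mulVecLin ∘ₗ (WithLp.linearEquiv 2 ℝ (κ → ℝ)).toLinearMap
  have hdim : Fintype.card κ - #s ≤ Module.finrank ℝ (LinearMap.ker L) := by
    have hrank := LinearMap.finrank_range_add_finrank_ker L
    have hrange := (LinearMap.range L).finrank_le
    simp only [finrank_euclideanSpace, Module.finrank_fintype_fun_eq_card,
      Fintype.card_coe] at hrank hrange
    omega
  let b := stdOrthonormalBasis ℝ (LinearMap.ker L)
  let e := fun p => ((b p : LinearMap.ker L) : EuclideanSpace ℝ κ)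
  have he : Orthonormal ℝ e := b.orthonormal.comp_linearIsometry (LinearMap.ker L).subtypeₗᵢ
  have hlow : ∀ p, c ≤ ∑ i ∈ sᶜ, (X *ᵥ (e p).ofLp) i ^ 2 := by
    intro p
    have hker : ∀ i ∈ s, (X *ᵥ (e p).ofLp) i = 0 := fun i hi =>
      congrFun (LinearMap.mem_ker.mp (b p).2) ⟨i, hi⟩
    have hunit : (e p).ofLp ⬝ᵥ (e p).ofLp = 1 := by
      have := real_inner_self_eq_norm_sq (e p)
      rwa [EuclideanSpace.inner_eq_star_dotProduct, star_trivial, he.1 p, one_pow] at this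
    calc c = c * ((e p).ofLp ⬝ᵥ (e p).ofLp) := by rw [hunit, mul_one]
      _ ≤ X *ᵥ (e p).ofLp ⬝ᵥ X *ᵥ (e p).ofLp := hX _
      _ = ∑ i ∈ sᶜ, (X *ᵥ (e p).ofLp) i ^ 2 := by
        rw [dotProduct, ← sum_compl_add_sum s,
          sum_eq_zero (s := s) fun i hi => by rw [hker i hi, mul_zero], add_zero]
        simp only [sq]
  have hbessel : ∀ i, ∑ p, (X *ᵥ (e p).ofLp) i ^ 2 ≤ ∑ j, X i j ^ 2 := by
    intro i
    simpa [EuclideanSpace.norm_sq_eq, EuclideanSpace.inner_eq_star_dotProduct, mulVec,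
      dotProduct_comm] using he.sum_inner_products_le (WithLp.toLp 2 (X i)) (s := univ)
  calc c * (Fintype.card κ - #s : ℕ) ≤ c * Module.finrank ℝ (LinearMap.ker L) := by
        gcongr
    _ = ∑ p, c := by simp [mul_comm]
    _ ≤ ∑ p, ∑ i ∈ sᶜ, (X *ᵥ (e p).ofLp) i ^ 2 := sum_le_sum fun p _ => hlow p
    _ = ∑ i ∈ sᶜ, ∑ p, (X *ᵥ (e p).ofLp) i ^ 2 := sum_comm
    _ ≤ ∑ i ∈ sᶜ, ∑ j, X i j ^ 2 := sum_le_sum fun i _ => hbessel i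

theorem sum_mul_nonneg_of_monotone_of_tails_nonneg {n : ℕ} (d e : Fin n → ℝ)
    (hd : Monotone d) (hd0 : ∀ k, 0 ≤ d k) (he : ∀ τ : ℕ, 0 ≤ ∑ k : Fin n with τ ≤ k.val, e k) :
    0 ≤ ∑ k, d k * e k := by
  induction n with
  | zero => simp
  | succ n ih =>
    have htail : ∀ τ : ℕ, ∑ k : Fin n with τ ≤ k.val, e k.succ =
        ∑ k : Fin (n + 1) with τ + 1 ≤ k.val, e k := by
      intro τ
      simp [sum_filter, Fin.sum_univ_succ]
    have htotal : 0 ≤ e 0 + ∑ k : Fin n, e k.succ := by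
      simpa [sum_filter, Fin.sum_univ_succ] using he 0
    have hrest := ih (fun k => d k.succ - d 0) (fun k => e k.succ)
      (fun i j hij => sub_le_sub_right (hd (Fin.succ_le_succ_iff.mpr hij)) _)
      (fun k => sub_nonneg.mpr (hd (Fin.zero_le _)))
      (fun τ => (htail τ).symm ▸ he (τ + 1))
    have hsplit : ∑ k : Fin n, d k.succ * e k.succ =
        d 0 * ∑ k : Fin n, e k.succ + ∑ k : Fin n, (d k.succ - d 0) * e k.succ := by
      rw [mul_sum, ← sum_add_distrib]
      exact sum_congr rfl fun k _ => by ring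
    rw [Fin.sum_univ_succ, hsplit]
    nlinarith [hd0 0]

theorem Fin.card_filter_le_val_lt {n m : ℕ} (hmn : m ≤ n) (τ : ℕ) :
    #{k : Fin n | τ ≤ k.val ∧ k.val < m} = m - τ := by
  have himage :
      ({k : Fin n | τ ≤ k.val ∧ k.val < m} : Finset (Fin n)).map Fin.valEmbedding = Ico τ m := by
    ext t
    simp only [Finset.mem_map, mem_filter, mem_univ, true_and, Fin.valEmbedding_apply, mem_Ico]
    exact ⟨fun ⟨k, hk, hkt⟩ => hkt ▸ hk, fun ht => ⟨⟨t, by omega⟩, ht, rfl⟩⟩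
  rw [← card_map, himage, Nat.card_Ico]

theorem mul_sum_lt_le_sum_mul_of_tails {n m : ℕ} (hmn : m ≤ n) (c : ℝ) (d w : Fin n → ℝ)
    (hd : Monotone d) (hd0 : ∀ k, 0 ≤ d k) (hw : ∀ k, 0 ≤ w k)
    (htail : ∀ τ ≤ m, c * (m - τ : ℕ) ≤ ∑ k : Fin n with τ ≤ k.val, w k) :
    c * ∑ k : Fin n with k.val < m, d k ≤ ∑ k, d k * w k := by
  let e : Fin n → ℝ := fun k => w k - if (k : ℕ) < m then c else 0
  have he : ∀ τ : ℕ, 0 ≤ ∑ k : Fin n with τ ≤ k.val, e k := by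
    intro τ
    have hsum : ∑ k : Fin n with τ ≤ k.val, e k =
        ∑ k : Fin n with τ ≤ k.val, w k - c * (m - τ : ℕ) := by
      rw [sum_sub_distrib, sum_ite, sum_const_zero, add_zero, sum_const, filter_filter,
        Fin.card_filter_le_val_lt hmn, nsmul_eq_mul, mul_comm]
    rw [hsum, sub_nonneg]
    rcases le_or_gt τ m with hτ | hτ
    · exact htail τ hτ
    · rw [Nat.sub_eq_zero_of_le hτ.le, Nat.cast_zero, mul_zero]
      exact sum_nonneg fun k _ => hw k
  have hnonneg := sum_mul_nonneg_of_monotone_of_tails_nonneg d e hd hd0 he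
  simp only [e, mul_sub, sum_sub_distrib, mul_ite, mul_zero, ← sum_filter, ← sum_mul] at hnonneg
  linarith [mul_comm c (∑ k : Fin n with k.val < m, d k)]

theorem sum_Icc_one_eq_sum_filter_val_lt {n m : ℕ} (hmn : m ≤ n) (f : ℕ → ℝ) :
    ∑ j ∈ Icc 1 m, f j = ∑ k : Fin n with k.val < m, f (k.val + 1) := by
  let succEmb : Fin n ↪ ℕ := ⟨fun k => k.val + 1, (add_left_injective 1).comp Fin.val_injective⟩
  have himage : ({k : Fin n | k.val < m} : Finset (Fin n)).map succEmb = Icc 1 m := by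
    ext j
    simp only [Finset.mem_map, mem_filter, mem_univ, true_and, mem_Icc, succEmb,
      Function.Embedding.coeFn_mk]
    constructor
    · rintro ⟨k, hk, rfl⟩
      omega
    · rintro ⟨h1, h2⟩
      exact ⟨⟨j - 1, by omega⟩, show j - 1 < m by omega, show j - 1 + 1 = j by omega⟩
  rw [← himage, sum_map]
  rfl

theorem symplJ_eq_neg_J (n : ℕ) : symplJ n = -Matrix.J (Fin n) ℝ := by
  simp [symplJ, Matrix.J, fromBlocks_neg]

theorem symplJ_transpose (n : ℕ) : (symplJ n)ᵀ = -symplJ n := by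
  rw [symplJ_eq_neg_J, transpose_neg, J_transpose]

theorem symplJ_mul_symplJ (n : ℕ) : symplJ n * symplJ n = -1 := by
  rw [symplJ_eq_neg_J, neg_mul_neg, J_squared]

theorem symplJ_mul_diagonal_sumElim {n : ℕ} (d : Fin n → ℝ) :
    symplJ n * diagonal (Sum.elim d d) = diagonal (Sum.elim d d) * symplJ n := by
  rw [← fromBlocks_diagonal, symplJ, fromBlocks_multiply, fromBlocks_multiply]
  simp

theorem isUnit_det_of_symplectic {n : ℕ} {M : Mat n} (hM : Mᵀ * symplJ n * M = symplJ n) :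
    IsUnit M.det := by
  have hJ : IsUnit (symplJ n).det := isUnit_det_of_right_inverse (B := -symplJ n)
    (by rw [Matrix.mul_neg, symplJ_mul_symplJ, neg_neg])
  have h := congrArg det hM
  rw [det_mul, det_mul, det_transpose] at h
  exact isUnit_iff_ne_zero.mpr fun h0 => hJ.ne_zero (by rw [← h, h0, zero_mul, zero_mul])

theorem exists_symplectic_transpose_mul_mul_eq {n m : ℕ} {M H : Mat n}
    (hMJ : Mᵀ * symplJ n * M = symplJ n) (T : MatR n m) (hT : Tᵀ * symplJ n * T = symplJ m) :
    ∃ T' : MatR n m, T'ᵀ * symplJ n * T' = symplJ m ∧ T'ᵀ * (Mᵀ * H * M) * T' = Tᵀ * H * T := by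
  have hM := isUnit_det_of_symplectic hMJ
  have hconj : ∀ X : Mat n, (M⁻¹ * T)ᵀ * (Mᵀ * X * M) * (M⁻¹ * T) = Tᵀ * X * T := by
    intro X
    rw [transpose_mul, transpose_nonsing_inv]
    simp only [Matrix.mul_assoc, nonsing_inv_mul_cancel_left _ _ (M.isUnit_det_transpose hM),
      mul_nonsing_inv_cancel_left _ _ hM]
  refine ⟨M⁻¹ * T, ?_, hconj H⟩
  rw [← hT, ← hconj (symplJ n), hMJ]

theorem transpose_mul_self_sub_symplJ {n m : ℕ} (T : MatR n m)
    (hT : Tᵀ * symplJ n * T = symplJ m) :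
    (T - symplJ n * T * symplJ m)ᵀ * (T - symplJ n * T * symplJ m) =
      4 + (T + symplJ n * T * symplJ m)ᵀ * (T + symplJ n * T * symplJ m) := by
  set B := symplJ n * T * symplJ m
  have hT' : Tᵀ * (symplJ n * T) = symplJ m := by rw [← Matrix.mul_assoc, hT]
  have hTB : Tᵀ * B = -1 := by
    simp only [B, ← Matrix.mul_assoc, hT, symplJ_mul_symplJ]
  have hBT : Bᵀ * T = -1 := by
    simp only [B, transpose_mul, symplJ_transpose, Matrix.neg_mul, Matrix.mul_neg, neg_neg,
      Matrix.mul_assoc, hT', symplJ_mul_symplJ]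
  simp only [transpose_sub, transpose_add, Matrix.sub_mul, Matrix.mul_sub, Matrix.add_mul,
    Matrix.mul_add, hTB, hBT]
  rw [show (4 : Matrix (Fin m ⊕ Fin m) (Fin m ⊕ Fin m) ℝ) = 1 + 1 + 1 + 1 by norm_num]
  abel

theorem four_mul_dotProduct_le_of_symplectic {n m : ℕ} (T : MatR n m)
    (hT : Tᵀ * symplJ n * T = symplJ m) (x : Fin m ⊕ Fin m → ℝ) :
    4 * (x ⬝ᵥ x) ≤ (T - symplJ n * T * symplJ m) *ᵥ x ⬝ᵥ (T - symplJ n * T * symplJ m) *ᵥ x := by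
  have hquad : ∀ X : MatR n m, x ⬝ᵥ (Xᵀ * X) *ᵥ x = X *ᵥ x ⬝ᵥ X *ᵥ x := fun X => by
    rw [← mulVec_mulVec, dotProduct_mulVec, vecMul_transpose]
  rw [← hquad, transpose_mul_self_sub_symplJ T hT, add_mulVec, dotProduct_add, hquad,
    ofNat_mulVec, dotProduct_smul, smul_eq_mul, le_add_iff_nonneg_right]
  exact sum_nonneg fun i _ => mul_self_nonneg _

theorem trace_sub_symplJ_conj_le {n m : ℕ} (T : MatR n m) {d : Fin n → ℝ} (hd : ∀ k, 0 ≤ d k) :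
    ((T - symplJ n * T * symplJ m)ᵀ * diagonal (Sum.elim d d) *
        (T - symplJ n * T * symplJ m)).trace ≤
      4 * (Tᵀ * diagonal (Sum.elim d d) * T).trace := by
  set D := diagonal (Sum.elim d d)
  set B := symplJ n * T * symplJ m
  have hD : ∀ i, 0 ≤ Sum.elim d d i := by rintro (k | k) <;> exact hd k
  have hpar : (T - B)ᵀ * D * (T - B) + (T + B)ᵀ * D * (T + B) =
      2 • (Tᵀ * D * T) + 2 • (Bᵀ * D * B) := by
    simp only [transpose_sub, transpose_add, Matrix.sub_mul, Matrix.mul_sub, Matrix.add_mul,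
      Matrix.mul_add]
    abel
  have hB : (Bᵀ * D * B).trace = (Tᵀ * D * T).trace := by
    have hJDJ : symplJ n * D * symplJ n = -D := by
      rw [symplJ_mul_diagonal_sumElim, Matrix.mul_assoc, symplJ_mul_symplJ, Matrix.mul_neg,
        Matrix.mul_one]
    calc (Bᵀ * D * B).trace
        = (symplJ m * (Tᵀ * (symplJ n * D * symplJ n) * T) * symplJ m).trace := by
          simp only [B, transpose_mul, symplJ_transpose, Matrix.neg_mul, Matrix.mul_neg, neg_neg,
            Matrix.mul_assoc]
      _ = (Tᵀ * D * T).trace := by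
          rw [hJDJ, trace_mul_cycle, symplJ_mul_symplJ]
          simp
  have hplus := trace_transpose_mul_diagonal_nonneg (T + B) hD
  have htr := congrArg trace hpar
  rw [trace_add, trace_add, trace_smul, trace_smul, hB] at htr
  simp only [nsmul_eq_mul, Nat.cast_ofNat] at htr
  linarith

theorem two_mul_sum_le_trace_of_symplectic {n m : ℕ} (hmn : m ≤ n) {d : Fin n → ℝ}
    (hd : Monotone d) (hd0 : ∀ k, 0 ≤ d k) (T : MatR n m) (hT : Tᵀ * symplJ n * T = symplJ m) :
    2 * ∑ k : Fin n with k.val < m, d k ≤ (Tᵀ * diagonal (Sum.elim d d) * T).trace := by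
  set X := T - symplJ n * T * symplJ m
  set w : Fin n → ℝ := fun k => ∑ c, X (Sum.inl k) c ^ 2 + ∑ c, X (Sum.inr k) c ^ 2
  have htr : (Xᵀ * diagonal (Sum.elim d d) * X).trace = ∑ k, d k * w k := by
    rw [trace_transpose_mul_diagonal_mul, Fintype.sum_sum_type, ← sum_add_distrib]
    simp only [Sum.elim_inl, Sum.elim_inr, w, mul_add]
  have htail : ∀ τ ≤ m, 8 * (m - τ : ℕ) ≤ ∑ k : Fin n with τ ≤ k.val, w k := by
    intro τ hτ
    set lo : Finset (Fin n) := {k | k.val < τ}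
    have hbound := mul_card_sub_le_sum_sq_rows_compl X (by norm_num : (0 : ℝ) ≤ 4)
      (four_mul_dotProduct_le_of_symplectic T hT) (lo.disjSum lo)
    have hcard : Fintype.card (Fin m ⊕ Fin m) - #(lo.disjSum lo) = 2 * (m - τ) := by
      rw [card_disjSum, Fintype.card_sum, Fintype.card_fin, Fin.card_filter_val_lt]
      omega
    have hsum : ∑ i ∈ (lo.disjSum lo)ᶜ, ∑ j, X i j ^ 2 = ∑ k : Fin n with τ ≤ k.val, w k := by
      rw [compl_eq_univ_sdiff, sdiff_eq_filter, sum_filter, sum_filter, Fintype.sum_sum_type,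
        ← sum_add_distrib]
      refine sum_congr rfl fun k _ => ?_
      simp only [inl_mem_disjSum, inr_mem_disjSum, lo, mem_filter, mem_univ, true_and, not_lt, w]
      split_ifs <;> simp
    rw [hcard, hsum] at hbound
    push_cast at hbound
    linarith
  have hw : ∀ k, 0 ≤ w k := fun k =>
    add_nonneg (sum_nonneg fun c _ => sq_nonneg _) (sum_nonneg fun c _ => sq_nonneg _)
  have hbathtub := mul_sum_lt_le_sum_mul_of_tails hmn 8 d w hd hd0 hw htail
  have hpar := trace_sub_symplJ_conj_le T hd0
  linarith

theorem sEig_val_add_one {n : ℕ} (A : Mat n) (k : Fin n) : sEig A (k.val + 1) = symplEig A k := by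
  simp [sEig]

theorem two_mul_sum_sEig_le_trace {n m : ℕ} (hmn : m ≤ n) {H : Mat n} (hH : H.PosDef)
    (T : MatR n m) (hT : Tᵀ * symplJ n * T = symplJ m) :
    2 * ∑ j ∈ Icc 1 m, sEig H j ≤ (Tᵀ * H * T).trace := by
  by_cases hW : ∃ d : Fin n → ℝ, Monotone d ∧ (∀ i, 0 < d i) ∧
      ∃ M : Mat n, Mᵀ * symplJ n * M = symplJ n ∧
        Mᵀ * H * M = Matrix.fromBlocks (Matrix.diagonal d) 0 0 (Matrix.diagonal d)
  · obtain ⟨hmono, hpos, M, hMJ, hMH⟩ := hW.choose_spec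
    have hEig : symplEig H = hW.choose := dif_pos hW
    obtain ⟨T', hT', hT'H⟩ := exists_symplectic_transpose_mul_mul_eq hMJ T hT (H := H)
    rw [← hT'H, hMH, fromBlocks_diagonal, sum_Icc_one_eq_sum_filter_val_lt hmn]
    simp only [sEig_val_add_one, hEig]
    exact two_mul_sum_le_trace_of_symplectic hmn hmono (fun k => (hpos k).le) T' hT'
  · -- without a Williamson normal form `symplEig H` is the junk value `0`
    have hzero : ∀ j, sEig H j = 0 := fun j => by
      unfold sEig symplEig
      rw [dif_neg hW]
      split <;> rfl
    simp only [hzero, sum_const_zero, mul_zero]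
    simpa [conjTranspose_eq_transpose_of_trivial] using
      (hH.posSemidef.conjTranspose_mul_mul_same T).trace_nonneg

theorem transpose_mul_mul_apply_eq_dotProduct {n m : ℕ} (B : Mat n) (S : MatR n m)
    (c c' : Fin m ⊕ Fin m) :
    (Sᵀ * B * S) c c' = (fun i => S i c) ⬝ᵥ (B *ᵥ fun i => S i c') := by
  rw [Matrix.mul_assoc]
  simp [Matrix.mul_apply, Matrix.mulVec, dotProduct]

theorem trace_transpose_mul_mul_of_inSpA {n m : ℕ} {A : Mat n} {S : MatR n m}
    (hS : InSpA n m A S) : (Sᵀ * A * S).trace = 2 * ∑ j ∈ Icc 1 m, sEig A j := by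
  have hpair : ∀ c c', (fun i => S i c) ⬝ᵥ (symplJ n *ᵥ fun i => S i c') = symplJ m c c' := by
    intro c c'
    rw [← transpose_mul_mul_apply_eq_dotProduct, hS.1]
  have hu : ∀ j : Fin m, (Sᵀ * A * S) (Sum.inl j) (Sum.inl j) = sEig A (j.val + 1) := by
    intro j
    rw [transpose_mul_mul_apply_eq_dotProduct, (hS.2 j).1, dotProduct_smul, hpair]
    simp [symplJ]
  have hv : ∀ j : Fin m, (Sᵀ * A * S) (Sum.inr j) (Sum.inr j) = sEig A (j.val + 1) := by
    intro j
    rw [transpose_mul_mul_apply_eq_dotProduct, (hS.2 j).2, dotProduct_smul, hpair]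
    simp [symplJ]
  rw [trace, Fintype.sum_sum_type, sum_Icc_one_eq_sum_filter_val_lt le_rfl]
  simp only [diag_apply, hu, hv, Fin.is_lt, filter_true]
  ring

theorem minner_neg_mul_transpose_sub {n m : ℕ} (S : MatR n m) (H A : Mat n) :
    minner (-(S * Sᵀ)) (H - A) = (Sᵀ * A * S).trace - (Sᵀ * H * S).trace := by
  rw [minner, Matrix.neg_mul, trace_neg, Matrix.mul_sub, trace_sub, Matrix.mul_assoc,
    Matrix.mul_assoc, trace_mul_comm S, trace_mul_comm S, Matrix.mul_assoc, Matrix.mul_assoc]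
  ring

theorem stmt16_general {n m : ℕ} (hmn : m ≤ n) (A : Mat n) (hA : A.PosDef)
    (S : MatR n m) (hS : InSpA n m A S) :
    ∀ H : Mat n, H.IsSymm →
      ((minner (-(S * Sᵀ)) (H - A) : ℝ) : EReal) ≤ sigmaE m H - sigmaE m A := by
  intro H _
  by_cases hH : H.PosDef
  · rw [sigmaE, sigmaE, if_pos hH, if_pos hA, ← EReal.coe_sub, EReal.coe_le_coe_iff,
      minner_neg_mul_transpose_sub, trace_transpose_mul_mul_of_inSpA hS]
    linarith [two_mul_sum_sEig_le_trace hmn hH S hS.1]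
  · simp only [sigmaE, if_neg hH, if_pos hA, EReal.top_sub_coe, le_top]

theorem stmt16 {n m : ℕ} (hm1 : 1 ≤ m) (hmn : m ≤ n) (A : Mat n) (hA : A.PosDef)
    (S : MatR n m) (hS : InSpA n m A S) :
    ∀ H : Mat n, H.IsSymm →
      ((minner (-(S * Sᵀ)) (H - A) : ℝ) : EReal) ≤ sigmaE m H - sigmaE m A :=
  stmt16_general hmn A hA S hS
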